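/- arXiv:1611.07279 — 4 statements merged into one kernel-verified Lean document; each statement's English description precedes it below -/
import Mathlib

section
/- Let R be a regular local ring of Krull dimension 3 whose maximal ideal m is generated by elements f, g, h. Then the ideals (f,g) and (h,g) are distinct, and the set of minimal prime ideals of R over the ideal (fh, g) is exactly {(f,g), (h,g)}. -/
open IsLocalRing

/-! A minimal prime `Q` over `(f, g)` has height at most `2 < 3` by Krull's height theorem, so
`Q ≠ m` and hence `h ∉ Q`. Writing `q ∈ Q ⊆ m = (f, g) + (h)` as `i + r h` with `i ∈ (f, g)` forces
`r ∈ Q`, so `Q ⊆ (f, g) + h Q` and Nakayama gives `Q = (f, g)`: the ideal `(f, g)` is prime and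
misses `h`, and symmetrically for `(h, g)`. A prime contains `(fh, g)` iff it contains `(f, g)` or
`(h, g)`, and these two primes are incomparable, so they are the minimal primes over `(fh, g)`. -/

namespace Ideal

variable {R : Type*} [CommRing R]

theorem IsPrime.le_of_le_sup_span_singleton {I Q : Ideal R} (hQ : Q.IsPrime) (hQfg : Q.FG)
    {x : R} (hx : x ∈ (⊥ : Ideal R).jacobson) (hxQ : x ∉ Q) (hIQ : I ≤ Q)
    (hQIx : Q ≤ I ⊔ span {x}) : Q ≤ I := by
  refine Submodule.le_of_le_smul_of_le_jacobson_bot hQfg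
    (span_le.mpr (Set.singleton_subset_iff.mpr hx)) fun q hq ↦ ?_
  obtain ⟨i, hi, y, hy, rfl⟩ := Submodule.mem_sup.mp (hQIx hq)
  obtain ⟨r, rfl⟩ := mem_span_singleton'.mp hy
  have hr : r ∈ Q :=
    (hQ.mem_or_mem (by simpa using Q.sub_mem hq (hIQ hi))).resolve_right hxQ
  rw [smul_eq_mul, mul_comm r]
  exact Submodule.add_mem_sup hi (mul_mem_mul (mem_span_singleton_self x) hr)

theorem height_le_encard_of_mem_minimalPrimes_span [IsNoetherianRing R] {p : Ideal R} {s : Set R}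
    (hp : p ∈ (span s).minimalPrimes) : p.height ≤ s.encard :=
  (height_le_spanRank_toENat_of_mem_minimalPrimes _ _ hp).trans
    (by simpa using Cardinal.toENat.monotone' (Submodule.spanRank_span_le_card (R := R) s))

section PairProduct

variable {a b c : R}

theorem span_pair_mul_le_iff {p : Ideal R} (hp : p.IsPrime) :
    span {a * b, c} ≤ p ↔ span {a, c} ≤ p ∨ span {b, c} ≤ p := by
  simp only [span_le, Set.insert_subset_iff, Set.singleton_subset_iff, SetLike.mem_coe,
    hp.mul_mem_iff_mem_or_mem, or_and_right]

theorem span_pair_mem_minimalPrimes_span_mul_pair (ha : (span {a, c}).IsPrime)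
    (hb : b ∉ span {a, c}) : span {a, c} ∈ (span {a * b, c}).minimalPrimes := by
  refine ⟨⟨ha, (span_pair_mul_le_iff ha).mpr (.inl le_rfl)⟩, fun q ⟨hq, hJq⟩ hqa ↦ ?_⟩
  refine ((span_pair_mul_le_iff hq).mp hJq).resolve_right fun hbq ↦ hb (hqa (hbq ?_))
  exact subset_span (Set.mem_insert b _)

theorem minimalPrimes_span_mul_pair (ha : (span {a, c}).IsPrime) (hb : (span {b, c}).IsPrime)
    (hab : b ∉ span {a, c}) (hba : a ∉ span {b, c}) :
    (span {a * b, c}).minimalPrimes = {span {a, c}, span {b, c}} := by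
  ext p
  constructor
  · intro hp
    rcases (span_pair_mul_le_iff hp.isPrime).mp hp.le with hap | hbp
    · exact .inl (le_antisymm (hp.2 ⟨ha, (span_pair_mul_le_iff ha).mpr (.inl le_rfl)⟩ hap) hap)
    · exact .inr (le_antisymm (hp.2 ⟨hb, (span_pair_mul_le_iff hb).mpr (.inr le_rfl)⟩ hbp) hbp)
  · rintro (rfl | rfl)
    · exact span_pair_mem_minimalPrimes_span_mul_pair ha hab
    · exact mul_comm a b ▸ span_pair_mem_minimalPrimes_span_mul_pair hb hba

end PairProduct

end Ideal

open Ideal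

theorem IsLocalRing.isPrime_span_and_notMem_of_maximalIdeal_eq_span_insert
    {R : Type*} [CommRing R] [IsLocalRing R] [IsNoetherianRing R] {s : Set R} {z : R}
    (hdim : (s.encard : WithBot ℕ∞) < ringKrullDim R)
    (hm : maximalIdeal R = span (insert z s)) :
    (span s).IsPrime ∧ z ∉ span s := by
  obtain ⟨Q, hQ, -⟩ := exists_minimalPrimes_le (hm ▸ span_mono (Set.subset_insert z s))
  have hzQ : z ∉ Q := by
    intro hz
    have hmQ : maximalIdeal R = Q := le_antisymm
      (hm ▸ span_le.mpr (Set.insert_subset hz (span_le.mp hQ.le)))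
      (le_maximalIdeal hQ.isPrime.ne_top)
    apply hdim.not_ge
    calc ringKrullDim R = (maximalIdeal R).height := maximalIdeal_height_eq_ringKrullDim.symm
      _ ≤ s.encard := by rw [hmQ]; exact_mod_cast height_le_encard_of_mem_minimalPrimes_span hQ
  have hQs : Q = span s := le_antisymm
    (hQ.isPrime.le_of_le_sup_span_singleton (IsNoetherian.noetherian Q)
      (by rw [jacobson_eq_maximalIdeal ⊥ bot_ne_top, hm]; exact subset_span (Set.mem_insert z s))
      hzQ hQ.le (by rw [sup_comm, ← span_insert, ← hm]; exact le_maximalIdeal hQ.isPrime.ne_top))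
    hQ.le
  exact hQs ▸ ⟨hQ.isPrime, hzQ⟩

/-- Let `R` be a regular local ring of Krull dimension 3 whose maximal ideal `m` is generated
by elements `f, g, h`. Then the ideals `(f,g)` and `(h,g)` are distinct, and the set of
minimal prime ideals of `R` over the ideal `(fh, g)` is exactly `{(f,g), (h,g)}`. -/
theorem minimalPrimes_of_nodal_curve_ideal
    (R : Type*) [CommRing R] [IsLocalRing R] [IsNoetherianRing R]
    (f g h : R) (hdim : ringKrullDim R = 3)
    (hm : IsLocalRing.maximalIdeal R = Ideal.span {f, g, h}) :
    (Ideal.span {f, g} : Ideal R) ≠ Ideal.span {h, g} ∧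
    (Ideal.span {f * h, g} : Ideal R).minimalPrimes =
      {Ideal.span {f, g}, Ideal.span {h, g}} := by
  have hpair (x y : R) : (({x, y} : Set R).encard : WithBot ℕ∞) < ringKrullDim R := by
    calc (({x, y} : Set R).encard : WithBot ℕ∞) ≤ (2 : ℕ∞) := WithBot.coe_le_coe.mpr <|
          (Set.encard_insert_le _ _).trans (by rw [Set.encard_singleton, one_add_one_eq_two])
      _ < ringKrullDim R := by rw [hdim]; decide
  obtain ⟨hP, hhP⟩ := isPrime_span_and_notMem_of_maximalIdeal_eq_span_insert (z := h)
    (hpair f g) (by rw [hm, Set.pair_comm g h, Set.insert_comm f h])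
  obtain ⟨hQ, hfQ⟩ := isPrime_span_and_notMem_of_maximalIdeal_eq_span_insert (z := f)
    (hpair h g) (by rw [hm, Set.pair_comm g h])
  refine ⟨fun e ↦ hhP (e ▸ subset_span (Set.mem_insert h _)), ?_⟩
  exact minimalPrimes_span_mul_pair hP hQ hhP hfQ
end

section
/- Let A be a commutative ring, let f, g be a regular sequence on A (f is a nonzerodivisor on A, g is a nonzerodivisor on A/(f), and (f,g) ≠ A), let n ≥ 1, and let p be any element of the ideal (ε) of A[ε]/(εⁿ). Then f + p, g is a regular sequence on A[ε]/(εⁿ): f + p is a nonzerodivisor on A[ε]/(εⁿ), g is a nonzerodivisor on A[ε]/(εⁿ, f + p), and the ideal (f + p, g) of A[ε]/(εⁿ) is proper. -/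
/-- The ring `A[ε]/(εⁿ)`, realized as the quotient of the polynomial ring `A[X]` by the
ideal `(Xⁿ)`. -/
abbrev EpsRing (A : Type*) [CommRing A] (n : ℕ) : Type _ :=
  Polynomial A ⧸ Ideal.span {(Polynomial.X : Polynomial A) ^ n}

/-- The element `ε` of `A[ε]/(εⁿ)`, i.e. the class of `X`. -/
noncomputable def eps (A : Type*) [CommRing A] (n : ℕ) : EpsRing A n :=
  Ideal.Quotient.mk _ (Polynomial.X : Polynomial A)

/-!
Lift `f + p` to `F = f + X Q` in `A[X]`. Both regularity claims become statements in `A[X]`: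
`F U ∈ (Xᵐ) → U ∈ (Xᵐ)` and `g U ∈ (F, Xᵐ) → U ∈ (F, Xᵐ)`. Each is proved by induction on `m`
by comparing constant terms, since `F ≡ f` modulo `X` and `A[X]/(F, X) ≅ A/(f)`; the passage from
`m` to `m + 1` in the second uses the first to cancel `Xᵐ`. Properness follows by reducing
modulo `ε`, which maps the ideal `(f + p, g)` onto `(f, g)`.
-/

open Polynomial
open scoped nonZeroDivisors

namespace Polynomial

variable {A : Type*} [CommRing A]

theorem X_pow_dvd_of_X_pow_dvd_mul {F U : A[X]} (hF : F.coeff 0 ∈ A⁰) {m : ℕ}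
    (h : X ^ m ∣ F * U) : X ^ m ∣ U := by
  induction m with
  | zero => exact one_dvd U
  | succ m ih =>
    obtain ⟨V, rfl⟩ := ih ((pow_dvd_pow X m.le_succ).trans h)
    have hXV : X ∣ F * V := by
      rw [← (isRegular_X_pow m).left.dvd_cancel_left, ← pow_succ, mul_left_comm]
      exact h
    rw [X_dvd_iff, mul_coeff_zero] at hXV
    obtain ⟨W, rfl⟩ := X_dvd_iff.2 (mem_nonZeroDivisors_iff_left.1 hF _ hXV)
    exact ⟨W, by ring⟩

theorem mem_span_pair_X_iff {F W : A[X]} :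
    W ∈ Ideal.span {F, X} ↔ W.coeff 0 ∈ Ideal.span {F.coeff 0} := by
  constructor
  · intro h
    obtain ⟨a, b, rfl⟩ := Ideal.mem_span_pair.1 h
    exact Ideal.mem_span_singleton'.2 ⟨a.coeff 0, by simp [mul_coeff_zero]⟩
  · intro h
    obtain ⟨c, hc⟩ := Ideal.mem_span_singleton'.1 h
    obtain ⟨V, hV⟩ := X_dvd_iff.2 (show (W - C c * F).coeff 0 = 0 by simp [mul_coeff_zero, hc])
    exact Ideal.mem_span_pair.2 ⟨C c, V, by linear_combination -hV⟩

theorem mem_span_pair_X_of_mul_mem {F G W : A[X]}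
    (hG : ∀ a, G.coeff 0 * a ∈ Ideal.span {F.coeff 0} → a ∈ Ideal.span {F.coeff 0})
    (h : G * W ∈ Ideal.span {F, X}) : W ∈ Ideal.span {F, X} := by
  rw [mem_span_pair_X_iff, mul_coeff_zero] at h
  exact mem_span_pair_X_iff.2 (hG _ h)

theorem mem_span_pair_X_pow_of_mul_mem {F G : A[X]} (hF : F.coeff 0 ∈ A⁰)
    (hG : ∀ a, G.coeff 0 * a ∈ Ideal.span {F.coeff 0} → a ∈ Ideal.span {F.coeff 0})
    {m : ℕ} {U : A[X]} (h : G * U ∈ Ideal.span {F, X ^ m}) : U ∈ Ideal.span {F, X ^ m} := by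
  induction m with
  | zero => simp [Ideal.span_insert]
  | succ m ih =>
    have hle : Ideal.span {F, X ^ (m + 1)} ≤ Ideal.span {F, X ^ m} := by
      simp only [Ideal.span_insert]
      exact sup_le_sup_left (Ideal.span_singleton_le_span_singleton.2 (pow_dvd_pow X m.le_succ)) _
    obtain ⟨V, W, rfl⟩ := Ideal.mem_span_pair.1 (ih (hle h))
    obtain ⟨S, T, hST⟩ := Ideal.mem_span_pair.1 h
    obtain ⟨S', hS'⟩ := X_pow_dvd_of_X_pow_dvd_mul hF (m := m) (U := S - G * V)
      ⟨G * W - T * X, by linear_combination hST⟩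
    have hGW : G * W = S' * F + T * X :=
      (isRegular_X_pow m).left (by linear_combination -hST + F * hS')
    obtain ⟨a, b, rfl⟩ := Ideal.mem_span_pair.1
      (mem_span_pair_X_of_mul_mem hG (Ideal.mem_span_pair.2 ⟨S', T, hGW.symm⟩))
    exact Ideal.mem_span_pair.2 ⟨V + a * X ^ m, b, by ring⟩

end Polynomial

namespace Ideal.Quotient

variable {R : Type*} [CommRing R] {I : Ideal R}

theorem mk_mem_nonZeroDivisors_iff {x : R} :
    mk I x ∈ (R ⧸ I)⁰ ↔ ∀ y, x * y ∈ I → y ∈ I := by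
  simp only [mem_nonZeroDivisors_iff_left, mk_surjective.forall, ← map_mul, eq_zero_iff_mem]

theorem mk_mem_nonZeroDivisors_quotient_span_singleton_iff {x y : R} :
    mk (span {mk I y}) (mk I x) ∈ ((R ⧸ I) ⧸ span {mk I y})⁰ ↔
      ∀ z, x * z ∈ span {y} ⊔ I → z ∈ span {y} ⊔ I := by
  have hcomap : (span {mk I y}).comap (mk I) = span {y} ⊔ I := by
    rw [← Set.image_singleton, ← map_span, comap_map_of_surjective _ mk_surjective,
      ← RingHom.ker_eq_comap_bot, mk_ker]
  simp only [mk_mem_nonZeroDivisors_iff, mk_surjective.forall, ← map_mul, ← mem_comap, hcomap]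

end Ideal.Quotient

/-- Let `A` be a commutative ring, let `f, g` be a regular sequence on `A`, let `n ≥ 1`, and
let `p` be any element of the ideal `(ε)` of `A[ε]/(εⁿ)`. Then `f + p, g` is a regular
sequence on `A[ε]/(εⁿ)`: `f + p` is a nonzerodivisor on `A[ε]/(εⁿ)`, `g` is a nonzerodivisor
on `A[ε]/(εⁿ, f + p)`, and the ideal `(f + p, g)` of `A[ε]/(εⁿ)` is proper. -/
theorem deformation_of_regular_sequence_is_regular_sequence
    (A : Type*) [CommRing A] (f g : A)
    (hf : f ∈ nonZeroDivisors A)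
    (hg : Ideal.Quotient.mk (Ideal.span {f}) g ∈ nonZeroDivisors (A ⧸ Ideal.span {f}))
    (hfg : Ideal.span {f, g} ≠ (⊤ : Ideal A))
    (n : ℕ) (hn : 1 ≤ n)
    (p : EpsRing A n) (hp : p ∈ Ideal.span {eps A n}) :
    algebraMap A (EpsRing A n) f + p ∈ nonZeroDivisors (EpsRing A n) ∧
    Ideal.Quotient.mk (Ideal.span {algebraMap A (EpsRing A n) f + p})
        (algebraMap A (EpsRing A n) g) ∈
      nonZeroDivisors (EpsRing A n ⧸ Ideal.span {algebraMap A (EpsRing A n) f + p}) ∧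
    Ideal.span {algebraMap A (EpsRing A n) f + p, algebraMap A (EpsRing A n) g} ≠
      (⊤ : Ideal (EpsRing A n)) := by
  obtain ⟨q, rfl⟩ := Ideal.mem_span_singleton'.1 hp
  obtain ⟨Q, rfl⟩ := Ideal.Quotient.mk_surjective q
  have hf_lift : algebraMap A (EpsRing A n) f + Ideal.Quotient.mk _ Q * eps A n =
      Ideal.Quotient.mk _ (C f + Q * X) := rfl
  have hg_lift : algebraMap A (EpsRing A n) g = Ideal.Quotient.mk _ (C g) := rfl
  have hF0 : (C f + Q * X).coeff 0 = f := by simp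
  rw [hf_lift, hg_lift]
  generalize C f + Q * X = F at *
  subst hF0
  refine ⟨?_, ?_, ?_⟩
  · rw [Ideal.Quotient.mk_mem_nonZeroDivisors_iff]
    simpa only [Ideal.mem_span_singleton] using fun U ↦ X_pow_dvd_of_X_pow_dvd_mul hf
  · rw [Ideal.Quotient.mk_mem_nonZeroDivisors_quotient_span_singleton_iff, ← Ideal.span_insert]
    exact fun U ↦ mem_span_pair_X_pow_of_mul_mem hf
      (by simpa [Ideal.Quotient.mk_mem_nonZeroDivisors_iff] using hg)
  · have hker : ∀ P ∈ Ideal.span {(X : A[X]) ^ n}, constantCoeff P = 0 := by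
      intro P hP
      obtain ⟨c, rfl⟩ := Ideal.mem_span_singleton'.1 hP
      simp [(Nat.one_le_iff_ne_zero.1 hn).symm]
    intro htop
    apply hfg
    simpa [Ideal.map_span, Set.image_pair, Ideal.map_top] using
      congrArg (Ideal.map (Ideal.Quotient.lift _ constantCoeff hker)) htop
end

section
/- Let A be a commutative ring, let f, g be a regular sequence on A, let f₁ ∈ A, and set B = A[ε]/(ε²). Then the Koszul complex 0 → B → B ⊕ B → B → B/(f + εf₁, g) → 0, with first map x ↦ (g·x, −(f + εf₁)·x), second map (x, y) ↦ (f + εf₁)·x + g·y, and third map the natural projection, is exact. -/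
/-!
The Koszul complex of a pair `F, G` in a commutative ring is exact as soon as `F, G` is a regular
sequence, so it suffices to show that `f + εf₁, g` is again a regular sequence on `A[ε]/(ε²)`.
Writing elements as `a + εb`, multiplication by `f + εf₁` is `a + εb ↦ fa + ε(fb + f₁a)`, which is
injective because `f` is. If `g(a + εb) = (f + εf₁)(c + εd)`, then `ga = fc` gives `a = fa'` and
`c = ga'`, after which `g(b - f₁a') = fd` gives `b = fb' + f₁a'`, i.e.
`a + εb = (f + εf₁)(a' + εb')`.
-/

section Koszul

variable {R : Type*} [CommRing R]

theorem Ideal.Quotient.mk_mem_nonZeroDivisors_iff_s9 {I : Ideal R} {G : R} :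
    Ideal.Quotient.mk I G ∈ nonZeroDivisors (R ⧸ I) ↔ ∀ y, G * y ∈ I → y ∈ I := by
  simp only [mem_nonZeroDivisors_iff_right, Ideal.Quotient.mk_surjective.forall, ← map_mul,
    Ideal.Quotient.eq_zero_iff_mem, mul_comm]

variable {F G : R}

theorem koszul_injective (hF : F ∈ nonZeroDivisors R) :
    Function.Injective (fun x : R => (G * x, -(F * x))) := by
  intro x y hxy
  have hFxy : F * (x - y) = 0 := by
    rw [mul_sub, neg_inj.mp (congrArg Prod.snd hxy), sub_self]
  exact sub_eq_zero.mp ((mul_left_mem_nonZeroDivisors_eq_zero_iff hF).mp hFxy)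

theorem koszul_exact_middle (hF : F ∈ nonZeroDivisors R)
    (hG : Ideal.Quotient.mk (Ideal.span {F}) G ∈ nonZeroDivisors (R ⧸ Ideal.span {F})) :
    Function.Exact (fun x : R => (G * x, -(F * x))) (fun q : R × R => F * q.1 + G * q.2) := by
  rintro ⟨x, y⟩
  constructor
  · intro hxy
    have hGy : G * y ∈ Ideal.span {F} :=
      Ideal.mem_span_singleton'.mpr ⟨-x, by linear_combination -hxy⟩
    obtain ⟨w, rfl⟩ := Ideal.mem_span_singleton'.mp
      (Ideal.Quotient.mk_mem_nonZeroDivisors_iff_s9.mp hG y hGy)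
    have hx : x = -(G * w) := by
      have : F * (x + G * w) = 0 := by linear_combination hxy
      exact eq_neg_of_add_eq_zero_left ((mul_left_mem_nonZeroDivisors_eq_zero_iff hF).mp this)
    exact ⟨-w, by simp only [hx, Prod.mk.injEq]; constructor <;> ring⟩
  · rintro ⟨z, hz⟩
    obtain ⟨rfl, rfl⟩ := Prod.mk.inj hz
    ring

theorem koszul_exact_right :
    Function.Exact (fun q : R × R => F * q.1 + G * q.2) (Ideal.Quotient.mk (Ideal.span {F, G})) := by
  intro z
  rw [Ideal.Quotient.eq_zero_iff_mem, Ideal.mem_span_pair]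
  simp [mul_comm]

theorem koszul_complex_exact (hF : F ∈ nonZeroDivisors R)
    (hG : Ideal.Quotient.mk (Ideal.span {F}) G ∈ nonZeroDivisors (R ⧸ Ideal.span {F})) :
    Function.Injective (fun x : R => (G * x, -(F * x))) ∧
    Function.Exact (fun x : R => (G * x, -(F * x))) (fun q : R × R => F * q.1 + G * q.2) ∧
    Function.Exact (fun q : R × R => F * q.1 + G * q.2) (Ideal.Quotient.mk (Ideal.span {F, G})) ∧
    Function.Surjective (Ideal.Quotient.mk (Ideal.span {F, G})) :=
  ⟨koszul_injective hF, koszul_exact_middle hF hG, koszul_exact_right,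
    Ideal.Quotient.mk_surjective⟩

end Koszul

namespace EpsRing

open Polynomial

variable {A : Type*} [CommRing A]

local notation "ι" => algebraMap A (EpsRing A 2)

theorem eps_mul_eps : eps A 2 * eps A 2 = 0 := by
  rw [eps, ← map_mul, Ideal.Quotient.eq_zero_iff_mem, ← sq]
  exact Ideal.subset_span rfl

theorem exists_eq_add_eps_mul (x : EpsRing A 2) :
    ∃ a b : A, x = ι a + eps A 2 * ι b := by
  obtain ⟨p, rfl⟩ := Ideal.Quotient.mk_surjective x
  refine ⟨p.coeff 0, p.coeff 1, ?_⟩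
  show Ideal.Quotient.mk _ p = Ideal.Quotient.mk _ (C (p.coeff 0)) +
    Ideal.Quotient.mk _ X * Ideal.Quotient.mk _ (C (p.coeff 1))
  rw [← map_mul, ← map_add, Ideal.Quotient.eq, Ideal.mem_span_singleton]
  refine ⟨p.divX.divX, ?_⟩
  have hp := p.divX_mul_X_add
  have hdivX := p.divX.divX_mul_X_add
  rw [coeff_divX] at hdivX
  linear_combination -hp - X * hdivX

theorem add_eps_mul_eq_zero_iff {a b : A} : ι a + eps A 2 * ι b = 0 ↔ a = 0 ∧ b = 0 := by
  refine ⟨fun h => ?_, by rintro ⟨rfl, rfl⟩; simp⟩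
  obtain ⟨q, hq⟩ : X ^ 2 ∣ C a + X * C b := by
    rw [← Ideal.mem_span_singleton, ← Ideal.Quotient.eq_zero_iff_mem, map_add, map_mul]
    exact h
  constructor
  · simpa using congrArg (coeff · 0) hq
  · simpa [mul_comm (X ^ 2 : A[X]) q, coeff_mul_X_pow'] using congrArg (coeff · 1) hq

theorem add_eps_mul_inj {a b c d : A} :
    ι a + eps A 2 * ι b = ι c + eps A 2 * ι d ↔ a = c ∧ b = d := by
  rw [← sub_eq_zero, ← sub_eq_zero (a := a), ← sub_eq_zero (a := b), ← add_eps_mul_eq_zero_iff,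
    map_sub, map_sub]
  ring_nf

theorem add_eps_mul_mul_add_eps_mul (a b c d : A) :
    (ι a + eps A 2 * ι b) * (ι c + eps A 2 * ι d) = ι (a * c) + eps A 2 * ι (a * d + b * c) := by
  simp only [map_mul, map_add]
  linear_combination ι b * ι d * eps_mul_eps (A := A)

variable {f g : A} (f₁ : A)

theorem add_eps_mul_mem_nonZeroDivisors (hf : f ∈ nonZeroDivisors A) :
    ι f + eps A 2 * ι f₁ ∈ nonZeroDivisors (EpsRing A 2) := by
  rw [mem_nonZeroDivisors_iff_right]
  intro x hx
  obtain ⟨a, b, rfl⟩ := exists_eq_add_eps_mul x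
  rw [add_eps_mul_mul_add_eps_mul, add_eps_mul_eq_zero_iff] at hx
  have hfa : f * a = 0 := by linear_combination hx.1
  obtain rfl : a = 0 := (mul_left_mem_nonZeroDivisors_eq_zero_iff hf).mp hfa
  have hfb : f * b = 0 := by linear_combination hx.2
  obtain rfl : b = 0 := (mul_left_mem_nonZeroDivisors_eq_zero_iff hf).mp hfb
  simp

theorem mk_algebraMap_mem_nonZeroDivisors (hf : f ∈ nonZeroDivisors A)
    (hg : Ideal.Quotient.mk (Ideal.span {f}) g ∈ nonZeroDivisors (A ⧸ Ideal.span {f})) :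
    Ideal.Quotient.mk (Ideal.span {ι f + eps A 2 * ι f₁}) (ι g) ∈
      nonZeroDivisors (EpsRing A 2 ⧸ Ideal.span {ι f + eps A 2 * ι f₁}) := by
  rw [Ideal.Quotient.mk_mem_nonZeroDivisors_iff_s9] at hg ⊢
  intro x hx
  obtain ⟨a, b, rfl⟩ := exists_eq_add_eps_mul x
  obtain ⟨y, hy⟩ := Ideal.mem_span_singleton'.mp hx
  obtain ⟨c, d, rfl⟩ := exists_eq_add_eps_mul y
  have hg' : ι g = ι g + eps A 2 * ι 0 := by simp
  rw [hg', add_eps_mul_mul_add_eps_mul, add_eps_mul_mul_add_eps_mul, add_eps_mul_inj] at hy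
  obtain ⟨hca, hdb⟩ := hy
  have hga : g * a ∈ Ideal.span {f} := Ideal.mem_span_singleton'.mpr ⟨c, by linear_combination hca⟩
  obtain ⟨a', rfl⟩ := Ideal.mem_span_singleton'.mp (hg a hga)
  have hc : c = g * a' := by
    have : f * (c - g * a') = 0 := by linear_combination hca
    exact sub_eq_zero.mp ((mul_left_mem_nonZeroDivisors_eq_zero_iff hf).mp this)
  have hgb : g * (b - f₁ * a') ∈ Ideal.span {f} :=
    Ideal.mem_span_singleton'.mpr ⟨d, by linear_combination hdb - f₁ * hc⟩
  obtain ⟨b', hb'⟩ := Ideal.mem_span_singleton'.mp (hg _ hgb)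
  refine Ideal.mem_span_singleton'.mpr ⟨ι a' + eps A 2 * ι b', ?_⟩
  rw [add_eps_mul_mul_add_eps_mul, add_eps_mul_inj]
  exact ⟨rfl, by linear_combination hb'⟩

end EpsRing

theorem koszul_complex_of_first_order_deformation_exact_general
    (A : Type*) [CommRing A] (f g f₁ : A)
    (hf : f ∈ nonZeroDivisors A)
    (hg : Ideal.Quotient.mk (Ideal.span {f}) g ∈ nonZeroDivisors (A ⧸ Ideal.span {f})) :
    Function.Injective
      (fun x : EpsRing A 2 =>
        ((algebraMap A (EpsRing A 2) g * x,
          -((algebraMap A (EpsRing A 2) f + eps A 2 * algebraMap A (EpsRing A 2) f₁) * x)) :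
          EpsRing A 2 × EpsRing A 2)) ∧
    Function.Exact
      (fun x : EpsRing A 2 =>
        ((algebraMap A (EpsRing A 2) g * x,
          -((algebraMap A (EpsRing A 2) f + eps A 2 * algebraMap A (EpsRing A 2) f₁) * x)) :
          EpsRing A 2 × EpsRing A 2))
      (fun q : EpsRing A 2 × EpsRing A 2 =>
        (algebraMap A (EpsRing A 2) f + eps A 2 * algebraMap A (EpsRing A 2) f₁) * q.1 +
          algebraMap A (EpsRing A 2) g * q.2) ∧
    Function.Exact
      (fun q : EpsRing A 2 × EpsRing A 2 =>
        (algebraMap A (EpsRing A 2) f + eps A 2 * algebraMap A (EpsRing A 2) f₁) * q.1 +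
          algebraMap A (EpsRing A 2) g * q.2)
      (Ideal.Quotient.mk (Ideal.span
        {algebraMap A (EpsRing A 2) f + eps A 2 * algebraMap A (EpsRing A 2) f₁,
         algebraMap A (EpsRing A 2) g})) ∧
    Function.Surjective
      (Ideal.Quotient.mk (Ideal.span
        {algebraMap A (EpsRing A 2) f + eps A 2 * algebraMap A (EpsRing A 2) f₁,
         algebraMap A (EpsRing A 2) g})) :=
  koszul_complex_exact (EpsRing.add_eps_mul_mem_nonZeroDivisors f₁ hf)
    (EpsRing.mk_algebraMap_mem_nonZeroDivisors f₁ hf hg)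

/-- Let `A` be a commutative ring, let `f, g` be a regular sequence on `A`, let `f₁ ∈ A`,
and set `B = A[ε]/(ε²)`. Then the Koszul complex
`0 → B → B ⊕ B → B → B/(f + εf₁, g) → 0`,
with first map `x ↦ (g·x, −(f + εf₁)·x)`, second map `(x, y) ↦ (f + εf₁)·x + g·y`, and third
map the natural projection, is exact. -/
theorem koszul_complex_of_first_order_deformation_exact
    (A : Type*) [CommRing A] (f g f₁ : A)
    (hf : f ∈ nonZeroDivisors A)
    (hg : Ideal.Quotient.mk (Ideal.span {f}) g ∈ nonZeroDivisors (A ⧸ Ideal.span {f}))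
    (hfg : Ideal.span {f, g} ≠ (⊤ : Ideal A)) :
    Function.Injective
      (fun x : EpsRing A 2 =>
        ((algebraMap A (EpsRing A 2) g * x,
          -((algebraMap A (EpsRing A 2) f + eps A 2 * algebraMap A (EpsRing A 2) f₁) * x)) :
          EpsRing A 2 × EpsRing A 2)) ∧
    Function.Exact
      (fun x : EpsRing A 2 =>
        ((algebraMap A (EpsRing A 2) g * x,
          -((algebraMap A (EpsRing A 2) f + eps A 2 * algebraMap A (EpsRing A 2) f₁) * x)) :
          EpsRing A 2 × EpsRing A 2))
      (fun q : EpsRing A 2 × EpsRing A 2 =>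
        (algebraMap A (EpsRing A 2) f + eps A 2 * algebraMap A (EpsRing A 2) f₁) * q.1 +
          algebraMap A (EpsRing A 2) g * q.2) ∧
    Function.Exact
      (fun q : EpsRing A 2 × EpsRing A 2 =>
        (algebraMap A (EpsRing A 2) f + eps A 2 * algebraMap A (EpsRing A 2) f₁) * q.1 +
          algebraMap A (EpsRing A 2) g * q.2)
      (Ideal.Quotient.mk (Ideal.span
        {algebraMap A (EpsRing A 2) f + eps A 2 * algebraMap A (EpsRing A 2) f₁,
         algebraMap A (EpsRing A 2) g})) ∧
    Function.Surjective
      (Ideal.Quotient.mk (Ideal.span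
        {algebraMap A (EpsRing A 2) f + eps A 2 * algebraMap A (EpsRing A 2) f₁,
         algebraMap A (EpsRing A 2) g})) :=
  koszul_complex_of_first_order_deformation_exact_general A f g f₁ hf hg
end

section
/- Let A be a commutative local ring, let f, g be elements of its maximal ideal, let a ∈ A, and let b, h be units of A with b − h ∈ (f, g). Then in A[ε]/(ε²) the ideals (f + ε·a·b⁻¹, g) and (f + ε·a·h⁻¹, g) are equal. -/
lemma eps_sq (A : Type*) [CommRing A] : eps A 2 * eps A 2 = 0 := by
  rw [eps, ← map_mul, ← sq, Ideal.Quotient.eq_zero_iff_mem]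
  exact Ideal.mem_span_singleton_self _

lemma key_mem (A : Type*) [CommRing A]
    (f g a : A) (b h : Aˣ) (hbh : (b : A) - (h : A) ∈ Ideal.span {f, g}) :
    algebraMap A (EpsRing A 2) f + eps A 2 * algebraMap A (EpsRing A 2) (a * (↑b⁻¹ : A)) ∈
      Ideal.span {algebraMap A (EpsRing A 2) f +
          eps A 2 * algebraMap A (EpsRing A 2) (a * (↑h⁻¹ : A)),
        algebraMap A (EpsRing A 2) g} := by
  obtain ⟨c, d, hcd⟩ := Ideal.mem_span_pair.mp hbh
  set φ := algebraMap A (EpsRing A 2) with hφ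
  set E := eps A 2 with hE
  have h2 : E * E = 0 := eps_sq A
  have hb : (b : A) * (↑b⁻¹ : A) = 1 := b.mul_inv
  have hh : (h : A) * (↑h⁻¹ : A) = 1 := h.mul_inv
  have hA : a * (↑b⁻¹ : A) =
      a * (↑h⁻¹ : A) - a * ↑b⁻¹ * ↑h⁻¹ * c * f - a * ↑b⁻¹ * ↑h⁻¹ * d * g := by
    linear_combination (a * ↑b⁻¹ * ↑h⁻¹) * hcd + (a * ↑h⁻¹) * hb - (a * ↑b⁻¹) * hh
  have hAφ := congrArg φ hA
  simp only [map_sub, map_mul] at hAφ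
  have key_eq : φ f + E * φ (a * (↑b⁻¹ : A)) =
      (1 - E * φ (a * ↑b⁻¹ * ↑h⁻¹ * c)) * (φ f + E * φ (a * (↑h⁻¹ : A))) +
      (-(E * φ (a * ↑b⁻¹ * ↑h⁻¹ * d))) * φ g := by
    simp only [map_mul] at *
    linear_combination E * hAφ + (φ a * φ ↑b⁻¹ * φ ↑h⁻¹ * φ c * φ a * φ ↑h⁻¹) * h2
  rw [key_eq]
  exact Ideal.add_mem _
    (Ideal.mul_mem_left _ _ (Ideal.subset_span (by simp)))
    (Ideal.mul_mem_left _ _ (Ideal.subset_span (by simp)))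

/-- Let `A` be a commutative local ring, let `f, g` be elements of its maximal ideal, let
`a ∈ A`, and let `b, h` be units of `A` with `b − h ∈ (f, g)`. Then in `A[ε]/(ε²)` the
ideals `(f + ε·a·b⁻¹, g)` and `(f + ε·a·h⁻¹, g)` are equal. -/
theorem deformation_ideal_indep_of_denominator
    (A : Type*) [CommRing A] [IsLocalRing A]
    (f g : A) (hf : f ∈ IsLocalRing.maximalIdeal A) (hg : g ∈ IsLocalRing.maximalIdeal A)
    (a : A) (b h : Aˣ) (hbh : (b : A) - (h : A) ∈ Ideal.span {f, g}) :
    Ideal.span {algebraMap A (EpsRing A 2) f +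
        eps A 2 * algebraMap A (EpsRing A 2) (a * (↑b⁻¹ : A)),
      algebraMap A (EpsRing A 2) g} =
    Ideal.span {algebraMap A (EpsRing A 2) f +
        eps A 2 * algebraMap A (EpsRing A 2) (a * (↑h⁻¹ : A)),
      algebraMap A (EpsRing A 2) g} := by
  apply le_antisymm <;> rw [Ideal.span_le] <;> intro x hx <;>
    rcases hx with rfl | rfl
  · exact key_mem A f g a b h hbh
  · exact Ideal.subset_span (by simp)
  · exact key_mem A f g a h b (by simpa using neg_mem hbh)
  · exact Ideal.subset_span (by simp)
end
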